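/- Let C be a cyclic 2ℓ-polytope with 2ℓ+2 vertices, and let c_1,…,c_{2k−1} be distinct vertices of C with 1 ≤ k ≤ ℓ+1. Then there exist a subset {c_{i_1},…,c_{i_k}} ⊆ {c_1,…,c_{2k−1}} of size k and a missing face M ∈ ℳ(C) such that {c_{i_1},…,c_{i_k}} ⊆ M. -/

import Mathlib

open Set

noncomputable section

/-- `Euc N` is the Euclidean space `ℝ^N`. -/
abbrev Euc (N : ℕ) : Type := EuclideanSpace ℝ (Fin N)

/-- A polytope is the convex hull of a finite point set. -/
def IsPolytope {N : ℕ} (P : Set (Euc N)) : Prop :=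
  ∃ V : Set (Euc N), V.Finite ∧ P = convexHull ℝ V

-- The dimension of a set: the dimension of its affine hull (with `pdim ∅ = -1`).
open Classical in
def pdim {N : ℕ} (A : Set (Euc N)) : ℤ :=
  if A = ∅ then -1 else (Module.finrank ℝ (affineSpan ℝ A).direction : ℤ)

/-- The vertex set of a polytope: its extreme points. -/
def verts {N : ℕ} (P : Set (Euc N)) : Set (Euc N) :=
  P.extremePoints ℝ

/-- A proper face of `P`: the intersection of `P` with a supporting hyperplane. -/
def IsProperFace {N : ℕ} (P F : Set (Euc N)) : Prop :=
  ∃ (l : Euc N →ₗ[ℝ] ℝ) (c : ℝ), l ≠ 0 ∧ (∀ x ∈ P, l x ≤ c) ∧ (∃ x ∈ P, l x = c) ∧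
    F = {x | x ∈ P ∧ l x = c}

/-- A face of `P`, where the improper faces `∅` and `P` itself are also counted as faces. -/
def IsFaceOf {N : ℕ} (P F : Set (Euc N)) : Prop :=
  F = ∅ ∨ F = P ∨ IsProperFace P F

/-- Membership in the boundary complex `𝓑(P)` (all proper faces together with `∅`). -/
def MemBoundary {N : ℕ} (P F : Set (Euc N)) : Prop :=
  F = ∅ ∨ IsProperFace P F

/-- `F` is a `k`-dimensional (proper) face of `P`. -/
def IsFaceOfDim {N : ℕ} (P F : Set (Euc N)) (k : ℤ) : Prop :=
  IsProperFace P F ∧ pdim F = k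

/-- A facet of a `d`-polytope `P` is a `(d-1)`-face. -/
def IsFacet {N : ℕ} (d : ℕ) (P F : Set (Euc N)) : Prop :=
  IsFaceOfDim P F ((d : ℤ) - 1)

/-- `P` is `k`-neighbourly: every `k` of its vertices form the vertex set of a proper face. -/
def IsKNeighbourly {N : ℕ} (P : Set (Euc N)) (k : ℕ) : Prop :=
  ∀ S ⊆ verts P, S.ncard = k → ∃ F, IsProperFace P F ∧ verts F = S

/-- `P` is a neighbourly `d`-polytope: a `d`-dimensional `⌊d/2⌋`-neighbourly polytope. -/
def IsNeighbourly {N : ℕ} (d : ℕ) (P : Set (Euc N)) : Prop :=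
  IsPolytope P ∧ pdim P = (d : ℤ) ∧ IsKNeighbourly P (d / 2)

/-- `U` is a universal `k`-face of the `d`-polytope `P`:
`conv (S ∪ U)` is a face of `P` for every `S ⊆ 𝒱(P)` with `|S| ≤ ⌊(d-k-1)/2⌋`. -/
def IsUniversalFace {N : ℕ} (d : ℕ) (P U : Set (Euc N)) (k : ℕ) : Prop :=
  IsFaceOfDim P U (k : ℤ) ∧
  ∀ S ⊆ verts P, S.ncard ≤ (d - k - 1) / 2 →
    IsProperFace P (convexHull ℝ (S ∪ U))

/-- `z` is beyond the facet `F` of `P`: the supporting hyperplane of `F` separates `z` from `P`. -/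
def Beyond {N : ℕ} (P F : Set (Euc N)) (z : Euc N) : Prop :=
  ∃ (l : Euc N →ₗ[ℝ] ℝ) (c : ℝ), l ≠ 0 ∧ (∀ x ∈ P, l x ≤ c) ∧
    F = {x | x ∈ P ∧ l x = c} ∧ c < l z

/-- `z` is beneath the facet `F` of `P`: `z` lies on the same open side of `aff F` as `P`. -/
def Beneath {N : ℕ} (P F : Set (Euc N)) (z : Euc N) : Prop :=
  ∃ (l : Euc N →ₗ[ℝ] ℝ) (c : ℝ), l ≠ 0 ∧ (∀ x ∈ P, l x ≤ c) ∧
    F = {x | x ∈ P ∧ l x = c} ∧ l z < c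

/-- `Phi x y j = Φ_j = conv {x_1, y_1, …, x_j, y_j}` (1-indexed; `Phi x y 0 = ∅`). -/
def Phi {N m : ℕ} (x y : Fin m → Euc N) (j : ℕ) : Set (Euc N) :=
  convexHull ℝ {p | ∃ i : Fin m, (i : ℕ) < j ∧ (p = x i ∨ p = y i)}

/-- `𝒯 = {Φ_1, …, Φ_m}` is a universal tower in `P`: the `x_i, y_i` are distinct vertices of `P`
and `Φ_j` is a universal `(2j-1)`-face of `P` for `1 ≤ j ≤ m`. -/
def IsUniversalTower {N : ℕ} (m : ℕ) (P : Set (Euc N)) (x y : Fin m → Euc N) : Prop :=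
  Function.Injective (Sum.elim x y) ∧
  (∀ i, x i ∈ verts P) ∧ (∀ i, y i ∈ verts P) ∧
  ∀ j, 1 ≤ j → j ≤ m → IsUniversalFace (2 * m) P (Phi x y j) (2 * j - 1)

/-- `F ∈ 𝒞(𝒯) = (𝓕_1∖𝓕_2) ∪ (𝓕_3∖𝓕_4) ∪ ⋯` where `𝓕_i` is the set of facets containing `Φ_i`
(with `𝓕_j = ∅` for `j > m`). -/
def InSewC {N : ℕ} (m : ℕ) (x y : Fin m → Euc N) (F : Set (Euc N)) : Prop :=
  ∃ i, Odd i ∧ 1 ≤ i ∧ i ≤ m ∧ Phi x y i ⊆ F ∧ (i = m ∨ ¬ Phi x y (i + 1) ⊆ F)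

/-- `z` lies exactly beyond `𝒞(𝒯)`: `z` is beyond every facet of `P` in `𝒞(𝒯)` and beneath
every facet of `P` not in `𝒞(𝒯)`. -/
def ExactlyBeyond {N : ℕ} (m : ℕ) (P : Set (Euc N)) (x y : Fin m → Euc N) (z : Euc N) : Prop :=
  ∀ F, IsFacet (2 * m) P F →
    (InSewC m x y F → Beyond P F z) ∧ (¬ InSewC m x y F → Beneath P F z)

/-- `Q` is a quotient polytope `P/G` of `P` by its face `G`, with vertex correspondence `φ`:
the face lattice of `Q` is isomorphic to the interval `{F : G ⊆ F ⊆ P}` of the face lattice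
of `P`, via vertex sets. -/
def IsQuotient {N M : ℕ} (P G : Set (Euc N)) (Q : Set (Euc M)) (φ : Euc N → Euc M) : Prop :=
  IsPolytope Q ∧ Set.BijOn φ (verts P \ verts G) (verts Q) ∧
  ∀ W ⊆ verts P \ verts G,
    ((∃ F, IsFaceOf P F ∧ G ⊆ F ∧ verts F = W ∪ verts G) ↔
     (∃ F', IsFaceOf Q F' ∧ verts F' = φ '' W))

/-- `P` and `Q` are combinatorially equivalent via the vertex bijection `ψ`:
`ψ` maps vertex sets of faces onto vertex sets of faces in both directions. -/
def CombEquiv {N M : ℕ} (P : Set (Euc N)) (Q : Set (Euc M)) (ψ : Euc N → Euc M) : Prop :=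
  Set.BijOn ψ (verts P) (verts Q) ∧
  ∀ W ⊆ verts P,
    ((∃ F, IsFaceOf P F ∧ verts F = W) ↔ (∃ F', IsFaceOf Q F' ∧ verts F' = ψ '' W))

/-- `A` is a missing face of `P` relative to the face `G`;
`IsMissingFaceRel P G` describes `ℳ(P/G)`. -/
def IsMissingFaceRel {N : ℕ} (P G A : Set (Euc N)) : Prop :=
  A ⊆ verts P \ verts G ∧
  ¬ MemBoundary P (convexHull ℝ (A ∪ G)) ∧
  ∀ A' ⊂ A, MemBoundary P (convexHull ℝ (A' ∪ G))

/-- `A ∈ ℳ(P)`, the set of missing faces of `P`. -/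
def IsMissingFace {N : ℕ} (P A : Set (Euc N)) : Prop :=
  IsMissingFaceRel P ∅ A

/-- The moment curve `t ↦ (t, t², …, t^d)` in `ℝ^d`. -/
def momentCurve (d : ℕ) (t : ℝ) : Euc d :=
  WithLp.toLp 2 fun i => t ^ ((i : ℕ) + 1)

/-- `C` is a cyclic `d`-polytope with `n` vertices: the convex hull of `n` distinct points
on the moment curve in `ℝ^d`. -/
def IsCyclicPolytope (d n : ℕ) (C : Set (Euc d)) : Prop :=
  ∃ t : Fin n → ℝ, Function.Injective t ∧
    C = convexHull ℝ (Set.range fun i => momentCurve d (t i)) ∧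
    (verts C).ncard = n

/-!
Order the vertices `v₀, …, v_{2l+1}` of `C` along the moment curve. On the moment curve a linear
functional is a polynomial of degree `≤ 2l` without constant term, so supporting hyperplanes of `C`
correspond to polynomials that are `≥ 0` at the parameters of the vertices. The polynomial
`∏_{i ∈ S} (t - tᵢ)²` shows that every `≤ l` vertices span a face. The even-indexed and the
odd-indexed vertices (`l + 1` of each) span no face: a supporting polynomial would vanish on one
parity class and be positive on the other, so it would have two roots between any two consecutive
positive points, `2l + 1` roots in all. Hence both parity classes are missing faces, and by
pigeonhole `k` of the given `2k - 1` vertices have the same parity.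
-/

theorem Set.eq_range_and_injective_of_subset_range {α ι : Type*} [Finite ι] {s : Set α}
    {v : ι → α} (hs : s ⊆ range v) (hcard : s.ncard = Nat.card ι) :
    s = range v ∧ Function.Injective v := by
  have hle : Nat.card ι ≤ (range v).ncard := hcard ▸ ncard_le_ncard hs
  refine ⟨eq_of_subset_of_ncard_le hs ?_, rangeFactorization_injective.mp
    (rangeFactorization_surjective.bijective_of_nat_card_le hle).injective⟩
  rw [hcard, ← image_univ, ← ncard_univ]
  exact ncard_image_le

theorem Multiset.card_filter_Ioo_add_le {α : Type*} [LinearOrder α] (s : Multiset α) {a b c : α}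
    (hab : a ≤ b) (hbc : b ≤ c) :
    (s.filter (· ∈ Set.Ioo a b)).card + (s.filter (· ∈ Set.Ioo b c)).card ≤
      (s.filter (· ∈ Set.Ioo a c)).card := by
  have hdisj : s.filter (fun x => x ∈ Set.Ioo a b ∧ x ∈ Set.Ioo b c) = 0 :=
    Multiset.filter_eq_nil.mpr fun x _ hx => (hx.1.2.trans hx.2.1).false
  rw [← Multiset.card_add, Multiset.filter_add_filter, hdisj, add_zero]
  refine Multiset.card_le_card (Multiset.monotone_filter_right s fun x hx => ?_)
  rcases hx with hx | hx
  · exact ⟨hx.1, hx.2.trans_le hbc⟩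
  · exact ⟨hab.trans_lt hx.1, hx.2⟩

theorem sep_convexHull_eq_convexHull_sep {E : Type*} [AddCommGroup E] [Module ℝ E] {A : Set E}
    {L : E →ₗ[ℝ] ℝ} {c : ℝ} (hA : ∀ y ∈ A, L y ≤ c) :
    {x ∈ convexHull ℝ A | L x = c} = convexHull ℝ {y ∈ A | L y = c} := by
  classical
  refine Subset.antisymm ?_ (convexHull_min (fun y hy => ⟨subset_convexHull ℝ A hy.1, hy.2⟩)
    ((convex_convexHull ℝ A).inter (convex_hyperplane L.isLinear c)))
  rintro x ⟨hx, hLx⟩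
  obtain ⟨ι, _, w, z, hw₀, hw₁, hz, rfl⟩ := mem_convexHull_iff_exists_fintype.mp hx
  -- `∑ wᵢ (c - L zᵢ) = 0` with nonnegative terms, so all weight sits on `{L = c}`
  have hslack : ∑ i, w i * (c - L (z i)) = 0 := by
    simp only [mul_sub, Finset.sum_sub_distrib, ← Finset.sum_mul, hw₁, one_mul]
    simp only [map_sum, map_smul, smul_eq_mul] at hLx
    linarith
  have hw : ∀ i, w i ≠ 0 → L (z i) = c := fun i hi => by
    have := (Finset.sum_eq_zero_iff_of_nonneg fun i _ =>
      mul_nonneg (hw₀ i) (sub_nonneg.mpr (hA _ (hz i)))).mp hslack i (Finset.mem_univ i)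
    linarith [(mul_eq_zero.mp this).resolve_left hi]
  set t := Finset.univ.filter fun i => w i ≠ 0
  have ht₁ : ∑ i ∈ t, w i = 1 := by rw [Finset.sum_filter_ne_zero, hw₁]
  have hcenter : t.centerMass w z = ∑ i, w i • z i := by
    rw [Finset.centerMass_eq_of_sum_1 _ _ ht₁]
    exact Finset.sum_filter_of_ne fun i _ hi h => hi (by simp [h])
  rw [← hcenter]
  exact t.centerMass_mem_convexHull (fun i _ => hw₀ i) (ht₁ ▸ one_pos)
    fun i hi => ⟨hz i, hw i (Finset.mem_filter.mp hi).2⟩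

theorem isProperFace_convexHull_sep {N : ℕ} {A : Set (Euc N)} {L : Euc N →ₗ[ℝ] ℝ} {c : ℝ}
    (hL : L ≠ 0) (hA : ∀ y ∈ A, L y ≤ c) (hc : ∃ y ∈ A, L y = c) :
    IsProperFace (convexHull ℝ A) (convexHull ℝ {y ∈ A | L y = c}) := by
  obtain ⟨y, hy, hLy⟩ := hc
  exact ⟨L, c, hL, fun x hx => convexHull_min hA (convex_halfSpace_le L.isLinear c) hx,
    ⟨y, subset_convexHull ℝ A hy, hLy⟩, (sep_convexHull_eq_convexHull_sep hA).symm⟩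

theorem IsProperFace.exists_apply_eq_iff {N : ℕ} {A B : Set (Euc N)} (hBA : B ⊆ A)
    (hA : A ⊆ verts (convexHull ℝ A)) (h : IsProperFace (convexHull ℝ A) (convexHull ℝ B)) :
    ∃ (L : Euc N →ₗ[ℝ] ℝ) (c : ℝ), L ≠ 0 ∧ ∀ y ∈ A, L y ≤ c ∧ (L y = c ↔ y ∈ B) := by
  obtain ⟨L, c, hL, hle, -, hF⟩ := h
  refine ⟨L, c, hL, fun y hy => ⟨hle y (subset_convexHull ℝ A hy), fun hLy => ?_,
    fun hyB => ?_⟩⟩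
  · have hyF : y ∈ convexHull ℝ B := hF ▸ ⟨subset_convexHull ℝ A hy, hLy⟩
    exact extremePoints_convexHull_subset (inter_extremePoints_subset_extremePoints_of_subset
      (convexHull_mono hBA) ⟨hyF, hA hy⟩)
  · exact (hF ▸ subset_convexHull ℝ B hyB : y ∈ {x | x ∈ convexHull ℝ A ∧ L x = c}).2

open Polynomial

namespace Polynomial

theorem two_le_card_roots_filter_Ioo {q : ℝ[X]} (hq : q ≠ 0) {a z b : ℝ} (haz : a < z) (hzb : z < b)
    (ha : 0 < q.eval a) (hb : 0 < q.eval b) (hz : q.IsRoot z) :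
    2 ≤ (q.roots.filter (· ∈ Ioo a b)).card := by
  -- `q = (X - z) g`, and `g` changes sign on `(a, b)`, so it has a root there as well
  set g := q /ₘ (X - C z)
  have hqg : (X - C z) * g = q := mul_divByMonic_eq_iff_isRoot.mpr hz
  have hga : g.eval a < 0 := by
    rw [← hqg, eval_mul, eval_sub, eval_X, eval_C] at ha
    nlinarith
  have hgb : 0 < g.eval b := by
    rw [← hqg, eval_mul, eval_sub, eval_X, eval_C] at hb
    nlinarith
  obtain ⟨w, hw, hgw⟩ := intermediate_value_Ioo (haz.trans hzb).le g.continuousOn ⟨hga, hgb⟩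
  have hg : g ≠ 0 := fun h => by simp [h] at hga
  rw [← hqg, roots_mul (hqg ▸ hq), roots_X_sub_C, Multiset.filter_add, Multiset.card_add,
    Multiset.filter_singleton, if_pos ⟨haz, hzb⟩, Multiset.card_singleton]
  have : w ∈ g.roots.filter (· ∈ Ioo a b) := Multiset.mem_filter.mpr ⟨(mem_roots hg).mpr hgw, hw⟩
  have := Multiset.card_pos_iff_exists_mem.mpr ⟨w, this⟩
  omega

theorem two_mul_le_card_roots_filter_Ioo {q : ℝ[X]} (hq : q ≠ 0) {m : ℕ} {x : ℕ → ℝ}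
    (hx : StrictMonoOn x (Iic (2 * m))) (hpos : ∀ j ≤ m, 0 < q.eval (x (2 * j)))
    (hroot : ∀ j < m, q.IsRoot (x (2 * j + 1))) :
    2 * m ≤ (q.roots.filter (· ∈ Ioo (x 0) (x (2 * m)))).card := by
  induction m with
  | zero => simp
  | succ m ih =>
    have hx' : StrictMonoOn x (Iic (2 * m)) := hx.mono (Iic_subset_Iic.mpr (by omega))
    have hstep := two_le_card_roots_filter_Ioo hq
      (hx (by simp) (by simp) (by omega : 2 * m < 2 * m + 1))
      (hx (by simp) (by simp) (by omega : 2 * m + 1 < 2 * (m + 1)))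
      (hpos m (by omega)) (hpos (m + 1) le_rfl) (hroot m (by omega))
    have hsplit := Multiset.card_filter_Ioo_add_le q.roots
      (hx'.monotoneOn (by simp) (by simp) (Nat.zero_le _))
      (hx (by simp) (by simp) (by omega : 2 * m < 2 * (m + 1))).le
    have := ih hx' (fun j hj => hpos j (by omega)) (fun j hj => hroot j (by omega))
    omega

theorem eq_zero_of_isRoot_of_pos_alternating {m r : ℕ} (hr : r < 2) {q : ℝ[X]}
    (hdeg : q.natDegree ≤ 2 * m) {u : Fin (2 * m + 2) → ℝ} (hu : StrictMono u)
    (hroot : ∀ i : Fin (2 * m + 2), (i : ℕ) % 2 = r → q.IsRoot (u i))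
    (hpos : ∀ i : Fin (2 * m + 2), (i : ℕ) % 2 ≠ r → 0 < q.eval (u i)) : q = 0 := by
  by_contra hq
  -- `x j = u (j + 1 - r)` for `j ≤ 2m` (the `min` only keeps the index in range) begins and
  -- ends at a positive value; one more root `u e`, `e ∈ {0, 2m + 1}`, lies outside `(x 0, x (2m))`
  set x : ℕ → ℝ := fun j => u ⟨min (j + 1 - r) (2 * m + 1), by omega⟩
  have hx : StrictMonoOn x (Iic (2 * m)) := fun a ha b hb hab =>
    hu (Fin.mk_lt_mk.mpr (by simp only [mem_Iic] at ha hb; omega))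
  have hinner := two_mul_le_card_roots_filter_Ioo hq hx
    (fun j _ => hpos _ (by simp only; omega)) (fun j _ => hroot _ (by simp only; omega))
  obtain ⟨e, he, hend⟩ : ∃ e : Fin (2 * m + 2),
      (e : ℕ) % 2 = r ∧ ((e : ℕ) = 0 ∨ (e : ℕ) = 2 * m + 1) := by
    obtain rfl | rfl : r = 0 ∨ r = 1 := by omega
    exacts [⟨0, rfl, by simp⟩, ⟨Fin.last _, by simp [Nat.add_mod], by simp⟩]
  have hout : u e ∉ Ioo (x 0) (x (2 * m)) := fun ⟨h0, h2m⟩ => by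
    rw [hu.lt_iff_lt, Fin.lt_def] at h0 h2m
    omega
  have houter : 0 < (q.roots.filter (· ∉ Ioo (x 0) (x (2 * m)))).card :=
    Multiset.card_pos_iff_exists_mem.mpr
      ⟨u e, Multiset.mem_filter.mpr ⟨(mem_roots hq).mpr (hroot e he), hout⟩⟩
  have htotal := Multiset.card_add (q.roots.filter (· ∈ Ioo (x 0) (x (2 * m))))
    (q.roots.filter (· ∉ Ioo (x 0) (x (2 * m))))
  rw [Multiset.filter_add_not] at htotal
  have := q.card_roots'
  omega

end Polynomial

def momentPoly {N : ℕ} (L : Euc N →ₗ[ℝ] ℝ) : ℝ[X] :=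
  ∑ i : Fin N, C (L (EuclideanSpace.single i 1)) * X ^ ((i : ℕ) + 1)

section momentPoly

variable {N : ℕ} (L : Euc N →ₗ[ℝ] ℝ)

theorem momentCurve_eq_sum (t : ℝ) :
    momentCurve N t = ∑ i : Fin N, t ^ ((i : ℕ) + 1) • EuclideanSpace.single i (1 : ℝ) := by
  ext j
  simp [momentCurve, Pi.single_apply]

theorem eval_momentPoly (t : ℝ) : (momentPoly L).eval t = L (momentCurve N t) := by
  simp only [momentPoly, eval_finsetSum, eval_mul, eval_C, eval_pow, eval_X, momentCurve_eq_sum,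
    map_sum, map_smul, smul_eq_mul]
  exact Finset.sum_congr rfl fun i _ => mul_comm _ _

theorem natDegree_momentPoly_le : (momentPoly L).natDegree ≤ N :=
  natDegree_sum_le_of_forall_le _ _ fun i _ =>
    (natDegree_C_mul_X_pow_le _ _).trans (by omega)

theorem coeff_momentPoly_zero : (momentPoly L).coeff 0 = 0 := by
  simp [momentPoly]

theorem coeff_momentPoly_succ (j : Fin N) :
    (momentPoly L).coeff ((j : ℕ) + 1) = L (EuclideanSpace.single j 1) := by
  simp [momentPoly, Fin.val_inj]

theorem momentPoly_eq_zero_iff : momentPoly L = 0 ↔ L = 0 := by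
  refine ⟨fun h => (EuclideanSpace.basisFun (Fin N) ℝ).toBasis.ext fun j => ?_, fun h => by
    simp [h, momentPoly]⟩
  simpa [h] using (coeff_momentPoly_succ L j).symm

theorem exists_momentPoly_eq {p : ℝ[X]} (hp : p.natDegree ≤ N) (hp₀ : p.coeff 0 = 0) :
    ∃ L : Euc N →ₗ[ℝ] ℝ, momentPoly L = p := by
  refine ⟨(EuclideanSpace.basisFun (Fin N) ℝ).toBasis.constr ℝ fun i => p.coeff ((i : ℕ) + 1), ?_⟩
  have hL : ∀ i : Fin N, ((EuclideanSpace.basisFun (Fin N) ℝ).toBasis.constr ℝ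
      fun i => p.coeff ((i : ℕ) + 1)) (EuclideanSpace.single i 1) = p.coeff ((i : ℕ) + 1) :=
    fun i => by
      rw [← EuclideanSpace.basisFun_apply, ← OrthonormalBasis.coe_toBasis,
        Module.Basis.constr_basis]
  conv_rhs => rw [p.as_sum_range_C_mul_X_pow' (Nat.lt_succ_of_le hp), Finset.sum_range_succ', hp₀]
  simp only [momentPoly, hL, C_0, zero_mul, add_zero]
  exact Fin.sum_univ_eq_sum_range (fun i => C (p.coeff (i + 1)) * X ^ (i + 1)) N

end momentPoly

theorem isProperFace_convexHull_momentCurve_image {ι : Type*} [Fintype ι] {N : ℕ} {u : ι → ℝ}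
    (hu : Function.Injective u) {S : Set ι} (hS : S.Nonempty) (hSN : 2 * S.ncard ≤ N) :
    IsProperFace (convexHull ℝ (range (momentCurve N ∘ u)))
      (convexHull ℝ (momentCurve N ∘ u '' S)) := by
  classical
  set p : ℝ[X] := ∏ i ∈ S.toFinset, (X - C (u i)) ^ 2
  have hp_eval : ∀ t, p.eval t = ∏ i ∈ S.toFinset, (t - u i) ^ 2 := by simp [p, eval_prod]
  have hp_deg : p.natDegree = 2 * S.ncard := by
    rw [show p = _ from Finset.prod_pow _ _ _, natDegree_pow, natDegree_finsetProd_X_sub_C_eq_card,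
      ncard_eq_toFinset_card', mul_comm]
  have hp_zero : ∀ i, p.eval (u i) = 0 ↔ i ∈ S := by
    simp [hp_eval, Finset.prod_eq_zero_iff, sub_eq_zero, hu.eq_iff]
  obtain ⟨L, hL⟩ := exists_momentPoly_eq (N := N) (p := C (p.coeff 0) - p)
    ((natDegree_sub_le _ _).trans (by simp [hp_deg, hSN])) (by simp)
  have hLγ : ∀ t, L (momentCurve N t) = p.coeff 0 - p.eval t := fun t => by
    rw [← eval_momentPoly, hL, eval_sub, eval_C]
  have hL₀ : L ≠ 0 := by
    rintro rfl
    have hpC : p = C (p.coeff 0) :=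
      (sub_eq_zero.mp (((momentPoly_eq_zero_iff _).mpr rfl) ▸ hL).symm).symm
    have := congrArg natDegree hpC
    rw [natDegree_C, hp_deg] at this
    have := (ncard_pos (toFinite S)).mpr hS
    omega
  have hset : {y ∈ range (momentCurve N ∘ u) | L y = p.coeff 0} = momentCurve N ∘ u '' S := by
    ext y
    simp only [mem_ofPred_eq, mem_range, mem_image, Function.comp_apply]
    constructor
    · rintro ⟨⟨i, rfl⟩, hi⟩
      exact ⟨i, (hp_zero i).mp (by linarith [hLγ (u i)]), rfl⟩
    · rintro ⟨i, hi, rfl⟩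
      exact ⟨⟨i, rfl⟩, by rw [hLγ, (hp_zero i).mpr hi, sub_zero]⟩
  rw [← hset]
  refine isProperFace_convexHull_sep hL₀ ?_ ?_
  · rintro _ ⟨i, rfl⟩
    simpa [hLγ, hp_eval] using Finset.prod_nonneg fun j _ => sq_nonneg (u i - u j)
  · obtain ⟨i, hi⟩ := hS
    exact ⟨_, mem_range_self i, by simp [hLγ, (hp_zero i).mpr hi]⟩

theorem ncard_setOf_mod_two_eq_le (m r : ℕ) :
    {i : Fin (2 * m + 2) | (i : ℕ) % 2 = r}.ncard ≤ m + 1 := by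
  refine (ncard_le_ncard_of_injOn (t := univ)
    (fun i : Fin (2 * m + 2) => (⟨i / 2, by omega⟩ : Fin (m + 1)))
    (fun _ _ => mem_univ _) fun i hi j hj h => Fin.ext ?_).trans (by simp)
  simp only [Fin.mk.injEq] at h
  simp only [mem_ofPred_eq] at hi hj
  omega

section CyclicPolytope

variable {m r : ℕ} {u : Fin (2 * m + 2) → ℝ}

theorem not_memBoundary_convexHull_momentCurve_parity (hr : r < 2) (hu : StrictMono u)
    (hinj : Function.Injective (momentCurve (2 * m) ∘ u))
    (hverts : range (momentCurve (2 * m) ∘ u) ⊆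
      verts (convexHull ℝ (range (momentCurve (2 * m) ∘ u)))) :
    ¬ MemBoundary (convexHull ℝ (range (momentCurve (2 * m) ∘ u)))
      (convexHull ℝ (momentCurve (2 * m) ∘ u '' {i | (i : ℕ) % 2 = r})) := by
  rintro (hempty | hface)
  · have hmem : (momentCurve (2 * m) ∘ u) ⟨r, by omega⟩ ∈
        convexHull ℝ (momentCurve (2 * m) ∘ u '' {i | (i : ℕ) % 2 = r}) :=
      subset_convexHull ℝ _ (mem_image_of_mem _ (Nat.mod_eq_of_lt hr))
    rw [hempty] at hmem
    exact hmem
  · obtain ⟨L, c, hL, hLc⟩ := hface.exists_apply_eq_iff (image_subset_range _ _) hverts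
    have hLu : ∀ i, L (momentCurve (2 * m) (u i)) ≤ c ∧
        (L (momentCurve (2 * m) (u i)) = c ↔ (i : ℕ) % 2 = r) := fun i => by
      have := hLc _ (mem_range_self i)
      rwa [hinj.mem_set_image] at this
    have hq : C c - momentPoly L = 0 := eq_zero_of_isRoot_of_pos_alternating hr
      ((natDegree_sub_le _ _).trans (max_le (by simp) (natDegree_momentPoly_le L))) hu
      (fun i hi => by simp [eval_momentPoly, (hLu i).2.mpr hi])
      (fun i hi => by
        rw [eval_sub, eval_C, eval_momentPoly, sub_pos]
        exact (hLu i).1.lt_of_ne (mt (hLu i).2.mp hi))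
    have hC : momentPoly L = C c := (sub_eq_zero.mp hq).symm
    have hc : c = 0 := by simpa [coeff_momentPoly_zero] using (congrArg (coeff · 0) hC).symm
    exact hL ((momentPoly_eq_zero_iff L).mp (by rw [hC, hc, C_0]))

theorem isMissingFace_convexHull_momentCurve_parity (hr : r < 2) (hu : StrictMono u)
    (hinj : Function.Injective (momentCurve (2 * m) ∘ u))
    (hverts : range (momentCurve (2 * m) ∘ u) ⊆
      verts (convexHull ℝ (range (momentCurve (2 * m) ∘ u)))) :
    IsMissingFace (convexHull ℝ (range (momentCurve (2 * m) ∘ u)))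
      (momentCurve (2 * m) ∘ u '' {i | (i : ℕ) % 2 = r}) := by
  refine ⟨?_, ?_, fun A hA => ?_⟩
  · simpa [verts] using (image_subset_range _ _).trans hverts
  · rw [union_empty]
    exact not_memBoundary_convexHull_momentCurve_parity hr hu hinj hverts
  · rw [union_empty]
    obtain ⟨S, -, rfl⟩ := subset_image_iff.mp hA.subset
    rcases S.eq_empty_or_nonempty with rfl | hS
    · exact Or.inl (by simp)
    · have hlt := ncard_lt_ncard
        ((hinj.injOn.image_ssubset_image_iff (subset_univ _) (subset_univ _)).mp hA)
      have := ncard_setOf_mod_two_eq_le m r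
      exact Or.inr (isProperFace_convexHull_momentCurve_image hu.injective hS (by omega))

end CyclicPolytope

theorem statement_4_general {l k : ℕ} (hk1 : 1 ≤ k)
    (C : Set (Euc (2 * l))) (hC : IsCyclicPolytope (2 * l) (2 * l + 2) C)
    (c : Fin (2 * k - 1) → Euc (2 * l)) (hc : Function.Injective c)
    (hcv : ∀ j, c j ∈ verts C) :
    ∃ T M : Set (Euc (2 * l)), T ⊆ Set.range c ∧ T.ncard = k ∧
      IsMissingFace C M ∧ T ⊆ M := by
  obtain ⟨t, -, rfl, hcard⟩ := hC
  set u := t ∘ Tuple.sort t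
  have hrange : range (momentCurve (2 * l) ∘ u) = range fun i => momentCurve (2 * l) (t i) :=
    (Tuple.sort t).surjective.range_comp fun i => momentCurve (2 * l) (t i)
  rw [← hrange] at hcard hcv ⊢
  obtain ⟨hverts, hinj⟩ := eq_range_and_injective_of_subset_range extremePoints_convexHull_subset
    (hcard.trans (Nat.card_fin _).symm)
  have hu : StrictMono u := (Tuple.monotone_sort t).strictMono_of_injective hinj.of_comp
  choose idx hidx using fun j => show c j ∈ range (momentCurve (2 * l) ∘ u) from hverts ▸ hcv j
  obtain ⟨r, hr, hfiber⟩ := Finset.exists_lt_card_fiber_of_mul_lt_card_of_maps_to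
    (s := Finset.univ) (t := Finset.range 2) (f := fun j => (idx j : ℕ) % 2) (n := k - 1)
    (fun j _ => Finset.mem_range.mpr (Nat.mod_lt _ two_pos))
    (by simp only [Finset.card_range, Finset.card_univ, Fintype.card_fin]; omega)
  obtain ⟨T, hTsub, hTcard⟩ := Finset.exists_subset_card_eq
    (show k ≤ (Finset.univ.filter fun j => (idx j : ℕ) % 2 = r).card by omega)
  refine ⟨c '' T, _, image_subset_range _ _,
    by rw [ncard_image_of_injective _ hc, ncard_coe_finset, hTcard],
    isMissingFace_convexHull_momentCurve_parity (Finset.mem_range.mp hr) hu hinj hverts.symm.subset,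
    ?_⟩
  rintro _ ⟨j, hj, rfl⟩
  exact ⟨idx j, (Finset.mem_filter.mp (hTsub hj)).2, hidx j⟩

/-- Let `C` be a cyclic `2ℓ`-polytope with `2ℓ+2` vertices, and
`c_1, …, c_{2k-1}` distinct vertices of `C` with `1 ≤ k ≤ ℓ+1`. Then some `k` of them are
contained in a missing face `M ∈ ℳ(C)`. -/
theorem statement_4 {l k : ℕ} (hk1 : 1 ≤ k) (hk : k ≤ l + 1)
    (C : Set (Euc (2 * l))) (hC : IsCyclicPolytope (2 * l) (2 * l + 2) C)
    (c : Fin (2 * k - 1) → Euc (2 * l)) (hc : Function.Injective c)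
    (hcv : ∀ j, c j ∈ verts C) :
    ∃ T M : Set (Euc (2 * l)), T ⊆ Set.range c ∧ T.ncard = k ∧
      IsMissingFace C M ∧ T ⊆ M :=
  statement_4_general hk1 C hC c hc hcv
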